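/- Let C be an octonion algebra over a commutative unital ring R with norm q, and let c ∈ C satisfy q(c) = 1. Then each of the maps B_c : x ↦ (c·x)·c, R_{c̄} : x ↦ x·c̄ and L_{c̄} : x ↦ c̄·x is a bijective isometry of (C, q), and (B_c, R_{c̄}, L_{c̄}) is a related triple; moreover, by cyclic permutation, (R_{c̄}, L_{c̄}, B_c) and (L_{c̄}, B_c, R_{c̄}) are related triples as well. -/
import Mathlib


/-- An octonion algebra's underlying module is locally free of rank 8. -/
def IsRankEight (R C : Type*) [CommRing R] [AddCommGroup C] [Module R C] : Prop :=
  ∀ (p : Ideal R) [p.IsPrime],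
    Module.Free (Localization.AtPrime p) (LocalizedModule p.primeCompl C) ∧
    Module.finrank (Localization.AtPrime p) (LocalizedModule p.primeCompl C) = 8

/-- The conjugation `x̄ = b_q(x,1)·1 − x` of a composition algebra. -/
def octConj {R C : Type*} [CommRing R] [NonAssocRing C] [Module R C]
    (q : QuadraticForm R C) (x : C) : C :=
  QuadraticMap.polar (⇑q) x 1 • (1 : C) - x

/-- A related triple on `C`: a triple of bijective `R`-linear isometries of
`(C, q)` such that `t₁(x·y) = conj(t₂ x̄) · conj(t₃ ȳ)` for all `x, y`. -/
def IsRelatedTriple {R C : Type*} [CommRing R] [NonAssocRing C] [Module R C]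
    (q : QuadraticForm R C) (t₁ t₂ t₃ : C →ₗ[R] C) : Prop :=
  Function.Bijective t₁ ∧ Function.Bijective t₂ ∧ Function.Bijective t₃ ∧
  (∀ x : C, q (t₁ x) = q x) ∧ (∀ x : C, q (t₂ x) = q x) ∧
  (∀ x : C, q (t₃ x) = q x) ∧
  ∀ x y : C, t₁ (x * y) = octConj q (t₂ (octConj q x)) * octConj q (t₃ (octConj q y))

set_option linter.unusedSectionVars false

section Aux

open QuadraticMap

variable {R C : Type*} [CommRing R] [NonAssocRing C] [Module R C]
  [SMulCommClass R C C] [IsScalarTower R C C] [FaithfulSMul R C]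
  (q : QuadraticForm R C)
  (hmul : ∀ x y : C, q (x * y) = q x * q y)
  (hns : Function.Bijective ⇑(QuadraticMap.polarBilin q))

include hmul hns

private lemma lemA (x y w : C) :
    polar (⇑q) (x * y) (x * w) = q x * polar (⇑q) y w := by
  simp only [QuadraticMap.polar, ← mul_add, hmul]; ring

private lemma lemB (x z y : C) :
    polar (⇑q) (x * y) (z * y) = polar (⇑q) x z * q y := by
  simp only [QuadraticMap.polar, ← add_mul, hmul]; ring

private lemma lemC (x y z w : C) :
    polar (⇑q) (x * y) (z * w)
      = polar (⇑q) x z * polar (⇑q) y w - polar (⇑q) (z * y) (x * w) := by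
  have h := lemA q hmul hns (x + z) y w
  have hq : q (x + z) = q x + q z + polar (⇑q) x z := by
    simp only [QuadraticMap.polar]; ring
  rw [add_mul, add_mul, polar_add_left, polar_add_right, polar_add_right,
    lemA q hmul hns x y w, lemA q hmul hns z y w, hq] at h
  linear_combination h

private lemma peq {u v : C} (h : ∀ w, polar (⇑q) u w = polar (⇑q) v w) : u = v :=
  hns.injective (LinearMap.ext fun w => by
    simpa only [polarBilin_apply_apply] using h w)

private lemma q_one : q 1 = (1 : R) := by
  have h0 : ∀ x : C, (1 - q 1) • x = (0 : R) • x := by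
    intro x
    rw [zero_smul]
    apply peq q hmul hns
    intro w
    rw [polar_smul_left, smul_eq_mul, polar_zero_left]
    have h := lemB q hmul hns x w 1
    rw [mul_one, mul_one] at h
    linear_combination h
  have h1 := FaithfulSMul.eq_of_smul_eq_smul (M := R) (α := C) h0
  linear_combination -h1

private lemma polar_one_one : polar (⇑q) (1 : C) 1 = (2 : R) := by
  have h : ((1 : C) + 1) = (2 : R) • (1 : C) := by rw [two_smul]
  simp only [QuadraticMap.polar, h, QuadraticMap.map_smul, q_one q hmul hns, smul_eq_mul]
  norm_num

private lemma polar_cj_one (x : C) :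
    polar (⇑q) (octConj q x) 1 = polar (⇑q) x 1 := by
  rw [octConj, polar_sub_left, polar_smul_left, polar_one_one q hmul hns, smul_eq_mul]
  ring

private lemma cj_cj (x : C) : octConj q (octConj q x) = x := by
  rw [octConj, polar_cj_one q hmul hns, octConj, sub_sub_cancel]

private lemma polar_cj_left (u w : C) :
    polar (⇑q) (octConj q u) w
      = polar (⇑q) u 1 * polar (⇑q) 1 w - polar (⇑q) u w := by
  rw [octConj, polar_sub_left, polar_smul_left, smul_eq_mul]

private lemma q_cj (x : C) : q (octConj q x) = q x := by
  have hadd : ∀ u v : C, q (u + v) = q u + q v + polar (⇑q) u v := by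
    intro u v; simp only [QuadraticMap.polar]; ring
  have hneg : q (-x) = q x := by
    rw [← neg_one_smul R x, QuadraticMap.map_smul, smul_eq_mul]; ring_nf
  rw [octConj, sub_eq_add_neg, hadd, hneg, QuadraticMap.map_smul, polar_smul_left,
    polar_neg_right, q_one q hmul hns, smul_eq_mul, smul_eq_mul,
    polar_comm (⇑q) (1 : C) x]
  ring

private lemma rel1 (x y z : C) :
    polar (⇑q) (x * y) z
      = polar (⇑q) x 1 * polar (⇑q) y z - polar (⇑q) y (x * z) := by
  have h := lemC q hmul hns x y 1 z
  rwa [one_mul, one_mul] at h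

private lemma rel2 (x y z : C) :
    polar (⇑q) (x * y) z
      = polar (⇑q) y 1 * polar (⇑q) x z - polar (⇑q) x (z * y) := by
  have h := lemC q hmul hns x 1 z y
  rw [mul_one, mul_one, polar_comm (⇑q) 1 y] at h
  rw [polar_comm (⇑q) (x * y) z]
  linear_combination h

private lemma D1 (x y z : C) :
    polar (⇑q) (x * y) z = polar (⇑q) y (octConj q x * z) := by
  have hcj : octConj q x * z = polar (⇑q) x 1 • z - x * z := by
    rw [octConj, sub_mul, smul_mul_assoc, one_mul]
  rw [hcj, polar_sub_right, polar_smul_right, smul_eq_mul]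
  exact rel1 q hmul hns x y z

private lemma D2 (x y z : C) :
    polar (⇑q) (x * y) z = polar (⇑q) x (z * octConj q y) := by
  have hcj : z * octConj q y = polar (⇑q) y 1 • z - z * y := by
    rw [octConj, mul_sub, mul_smul_comm, mul_one]
  rw [hcj, polar_sub_right, polar_smul_right, smul_eq_mul]
  exact rel2 q hmul hns x y z

private lemma D1' (x y z : C) :
    polar (⇑q) (octConj q x * y) z = polar (⇑q) y (x * z) := by
  rw [D1 q hmul hns, cj_cj q hmul hns]

private lemma D2' (x y z : C) :
    polar (⇑q) (x * octConj q y) z = polar (⇑q) x (z * y) := by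
  rw [D2 q hmul hns, cj_cj q hmul hns]

private lemma E1 (x y : C) : octConj q x * (x * y) = q x • y := by
  apply peq q hmul hns; intro w
  rw [D1' q hmul hns, lemA q hmul hns, polar_smul_left, smul_eq_mul]

private lemma E2 (x y : C) : (y * x) * octConj q x = q x • y := by
  apply peq q hmul hns; intro w
  rw [D2' q hmul hns, lemB q hmul hns, polar_smul_left, smul_eq_mul]
  ring

private lemma E1' (x y : C) : x * (octConj q x * y) = q x • y := by
  have h := E1 q hmul hns (octConj q x) y
  rwa [cj_cj q hmul hns, q_cj q hmul hns] at h

private lemma E2' (x y : C) : (y * octConj q x) * x = q x • y := by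
  have h := E2 q hmul hns (octConj q x) y
  rwa [cj_cj q hmul hns, q_cj q hmul hns] at h

private lemma mul_cj_self (x : C) : x * octConj q x = q x • 1 := by
  have h := E2 q hmul hns x 1
  rwa [one_mul] at h

private lemma cj_self_mul (x : C) : octConj q x * x = q x • 1 := by
  have h := E1 q hmul hns x 1
  rwa [mul_one] at h

private lemma cjmul (x y : C) :
    octConj q (x * y) = octConj q y * octConj q x := by
  apply peq q hmul hns; intro w
  rw [polar_cj_left q hmul hns (x * y) w,
    D1' q hmul hns y (octConj q x) w,
    polar_cj_left q hmul hns x (y * w),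
    rel1 q hmul hns x y 1, mul_one,
    rel1 q hmul hns x y w,
    polar_comm (⇑q) 1 (y * w), rel1 q hmul hns y w 1, mul_one,
    polar_comm (⇑q) x (y * w), rel2 q hmul hns y w x,
    polar_comm (⇑q) 1 w, polar_comm (⇑q) w y, polar_comm (⇑q) y x]
  ring

private lemma CH (x : C) : x * x = polar (⇑q) x 1 • x - q x • 1 := by
  have h := cj_self_mul q hmul hns x
  rw [octConj, sub_mul, smul_mul_assoc, one_mul] at h
  rw [← h, sub_sub_cancel]

private lemma leftalt (x y : C) : (x * x) * y = x * (x * y) := by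
  have h1 : polar (⇑q) x 1 • (x * y) - x * (x * y) = q x • y := by
    rw [← E1 q hmul hns x y, octConj, sub_mul, smul_mul_assoc, one_mul]
  rw [CH q hmul hns, sub_mul, smul_mul_assoc, smul_mul_assoc, one_mul, ← h1,
    sub_sub_cancel]

private lemma rightalt (a b : C) : (b * a) * a = b * (a * a) := by
  have h1 : polar (⇑q) a 1 • (b * a) - (b * a) * a = q a • b := by
    rw [← E2 q hmul hns a b, octConj, mul_sub, mul_smul_comm, mul_one]
  rw [CH q hmul hns, mul_sub, mul_smul_comm, mul_smul_comm, mul_one, ← h1,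
    sub_sub_cancel]

private lemma flex (x y : C) : (x * y) * x = x * (y * x) := by
  have h := rightalt q hmul hns (x + y) x
  rw [← sub_eq_zero] at h ⊢
  rw [← h]
  simp only [mul_add, add_mul]
  rw [rightalt q hmul hns x x, rightalt q hmul hns y x, leftalt q hmul hns x y]
  abel

private lemma moufangA (c x y : C) :
    (c * (x * y)) * c = (c * x) * (y * c) := by
  apply peq q hmul hns; intro w
  rw [D2 q hmul hns (c * (x * y)) c w,
    lemC q hmul hns c (x * y) w (octConj q c),
    mul_cj_self q hmul hns c,
    polar_smul_right, smul_eq_mul,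
    rel2 q hmul hns w (x * y) 1, one_mul,
    D1 q hmul hns x y (octConj q c),
    -- RHS
    D1 q hmul hns (c * x) (y * c) w,
    cjmul q hmul hns c x,
    lemC q hmul hns y c (octConj q x * octConj q c) w,
    E2' q hmul hns c (octConj q x),
    polar_smul_left, smul_eq_mul,
    polar_cj_left q hmul hns x (y * w),
    -- expand remaining trilinears
    rel1 q hmul hns x y 1, mul_one,
    polar_comm (⇑q) w (x * y), rel1 q hmul hns x y w,
    polar_comm (⇑q) 1 (y * w), rel1 q hmul hns y w 1, mul_one,
    polar_comm (⇑q) x (y * w), rel2 q hmul hns y w x,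
    polar_comm (⇑q) w y, polar_comm (⇑q) y x]
  ring

private lemma moufangB (c x y : C) :
    c * ((x * y) * c) = (c * x) * (y * c) := by
  rw [← flex q hmul hns c (x * y)]
  exact moufangA q hmul hns c x y

private lemma M1 (c w : C) :
    c * ((octConj q c * w) * c) = q c • (w * c) := by
  rw [moufangB q hmul hns c (octConj q c) w, mul_cj_self q hmul hns c,
    smul_mul_assoc, one_mul]

private lemma cj_mul_left (x y : C) :
    octConj q x * y = polar (⇑q) x 1 • y - x * y := by
  rw [octConj, sub_mul, smul_mul_assoc, one_mul]

private lemma mul_cj_right (y x : C) :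
    y * octConj q x = polar (⇑q) x 1 • y - y * x := by
  rw [octConj, mul_sub, mul_smul_comm, mul_one]

private lemma I2 (c x y : C) (hc : q c = 1) :
    (x * y) * octConj q c = (x * c) * (octConj q c * (y * octConj q c)) := by
  apply peq q hmul hns; intro w
  rw [D2' q hmul hns (x * y) c w,
    D1 q hmul hns (x * c) (octConj q c * (y * octConj q c)) w,
    cjmul q hmul hns x c,
    lemC q hmul hns (octConj q c) (y * octConj q c) (octConj q c * octConj q x) w,
    polar_comm (⇑q) (octConj q c) (octConj q c * octConj q x),
    D1' q hmul hns c (octConj q x) (octConj q c),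
    mul_cj_self q hmul hns c, polar_smul_right, smul_eq_mul,
    polar_cj_one q hmul hns x,
    ← moufangA q hmul hns (octConj q c) (octConj q x) y,
    D2 q hmul hns (octConj q c * (octConj q x * y)) (octConj q c) (octConj q c * w),
    cj_cj q hmul hns c,
    D1' q hmul hns c (octConj q x * y) ((octConj q c * w) * c),
    M1 q hmul hns c w, polar_smul_right, smul_eq_mul,
    cj_mul_left q hmul hns x y, polar_sub_left, polar_smul_left, smul_eq_mul,
    D2' q hmul hns y c w, hc]
  ring

private lemma I3 (c x y : C) (hc : q c = 1) :
    octConj q c * (x * y) = (octConj q c * (x * octConj q c)) * (c * y) := by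
  apply peq q hmul hns; intro w
  rw [D2 q hmul hns (octConj q c * (x * octConj q c)) (c * y) w,
    cjmul q hmul hns c y,
    ← flex q hmul hns (octConj q c) x,
    lemC q hmul hns (octConj q c * x) (octConj q c) w (octConj q y * octConj q c),
    polar_comm (⇑q) (octConj q c) (octConj q y * octConj q c),
    D2' q hmul hns (octConj q y) c (octConj q c),
    cj_self_mul q hmul hns c, polar_smul_right, smul_eq_mul,
    polar_cj_one q hmul hns y,
    ← moufangA q hmul hns (octConj q c) x (octConj q y),
    lemB q hmul hns w (octConj q c * (x * octConj q y)) (octConj q c),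
    q_cj q hmul hns c,
    mul_cj_right q hmul hns x y, mul_sub, mul_smul_comm,
    polar_sub_right, polar_smul_right, smul_eq_mul,
    polar_comm (⇑q) w (octConj q c * x),
    polar_comm (⇑q) w (octConj q c * (x * y)), hc]
  ring

end Aux


/-- Let `C` be an octonion algebra over `R` and `c ∈ C` with `q c = 1`.  Then
`(B_c, R_c̄, L_c̄)` is a related triple, and so are its cyclic permutations
`(R_c̄, L_c̄, B_c)` and `(L_c̄, B_c, R_c̄)`. -/
theorem basic_related_triples
    {R C : Type*} [CommRing R] [NonAssocRing C] [Module R C]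
    [SMulCommClass R C C] [IsScalarTower R C C]
    [Module.Finite R C] [Module.Projective R C] [FaithfulSMul R C]
    (q : QuadraticForm R C)
    (hmul : ∀ x y : C, q (x * y) = q x * q y)
    (hns : Function.Bijective ⇑(QuadraticMap.polarBilin q))
    (hrank : IsRankEight R C)
    (c : C) (hc : q c = 1) :
    IsRelatedTriple q ((LinearMap.mulRight R c).comp (LinearMap.mulLeft R c))
      (LinearMap.mulRight R (octConj q c)) (LinearMap.mulLeft R (octConj q c)) ∧
    IsRelatedTriple q (LinearMap.mulRight R (octConj q c))
      (LinearMap.mulLeft R (octConj q c))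
      ((LinearMap.mulRight R c).comp (LinearMap.mulLeft R c)) ∧
    IsRelatedTriple q (LinearMap.mulLeft R (octConj q c))
      ((LinearMap.mulRight R c).comp (LinearMap.mulLeft R c))
      (LinearMap.mulRight R (octConj q c)) := by
  -- bijectivity of the three maps
  have hLc : Function.Bijective ⇑(LinearMap.mulLeft R c) := by
    refine ⟨Function.LeftInverse.injective (g := fun x => octConj q c * x) ?_,
      Function.RightInverse.surjective (g := fun x => octConj q c * x) ?_⟩
    · intro x
      simp only [LinearMap.mulLeft_apply]
      rw [E1 q hmul hns c x, hc, one_smul]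
    · intro x
      simp only [LinearMap.mulLeft_apply]
      rw [E1' q hmul hns c x, hc, one_smul]
  have hRc : Function.Bijective ⇑(LinearMap.mulRight R c) := by
    refine ⟨Function.LeftInverse.injective (g := fun x => x * octConj q c) ?_,
      Function.RightInverse.surjective (g := fun x => x * octConj q c) ?_⟩
    · intro x
      simp only [LinearMap.mulRight_apply]
      rw [E2 q hmul hns c x, hc, one_smul]
    · intro x
      simp only [LinearMap.mulRight_apply]
      rw [E2' q hmul hns c x, hc, one_smul]
  have hB : Function.Bijective
      ⇑((LinearMap.mulRight R c).comp (LinearMap.mulLeft R c)) := by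
    rw [LinearMap.coe_comp]
    exact hRc.comp hLc
  have hR : Function.Bijective ⇑(LinearMap.mulRight R (octConj q c)) := by
    refine ⟨Function.LeftInverse.injective (g := fun x => x * c) ?_,
      Function.RightInverse.surjective (g := fun x => x * c) ?_⟩
    · intro x
      simp only [LinearMap.mulRight_apply]
      rw [E2' q hmul hns c x, hc, one_smul]
    · intro x
      simp only [LinearMap.mulRight_apply]
      rw [E2 q hmul hns c x, hc, one_smul]
  have hL : Function.Bijective ⇑(LinearMap.mulLeft R (octConj q c)) := by
    refine ⟨Function.LeftInverse.injective (g := fun x => c * x) ?_,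
      Function.RightInverse.surjective (g := fun x => c * x) ?_⟩
    · intro x
      simp only [LinearMap.mulLeft_apply]
      rw [E1' q hmul hns c x, hc, one_smul]
    · intro x
      simp only [LinearMap.mulLeft_apply]
      rw [E1 q hmul hns c x, hc, one_smul]
  -- the three maps are isometries
  have hqcj : q (octConj q c) = 1 := by rw [q_cj q hmul hns, hc]
  have qB : ∀ x : C,
      q (((LinearMap.mulRight R c).comp (LinearMap.mulLeft R c)) x) = q x := by
    intro x
    simp only [LinearMap.coe_comp, Function.comp_apply, LinearMap.mulRight_apply,
      LinearMap.mulLeft_apply]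
    rw [hmul, hmul, hc]; ring
  have qR : ∀ x : C, q ((LinearMap.mulRight R (octConj q c)) x) = q x := by
    intro x
    simp only [LinearMap.mulRight_apply]
    rw [hmul, hqcj, mul_one]
  have qL : ∀ x : C, q ((LinearMap.mulLeft R (octConj q c)) x) = q x := by
    intro x
    simp only [LinearMap.mulLeft_apply]
    rw [hmul, hqcj, one_mul]
  -- the triality relations
  have T1 : ∀ x y : C,
      ((LinearMap.mulRight R c).comp (LinearMap.mulLeft R c)) (x * y)
        = octConj q ((LinearMap.mulRight R (octConj q c)) (octConj q x))
          * octConj q ((LinearMap.mulLeft R (octConj q c)) (octConj q y)) := by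
    intro x y
    simp only [LinearMap.coe_comp, Function.comp_apply, LinearMap.mulRight_apply,
      LinearMap.mulLeft_apply]
    rw [cjmul q hmul hns (octConj q x) (octConj q c),
      cjmul q hmul hns (octConj q c) (octConj q y),
      cj_cj q hmul hns c, cj_cj q hmul hns x, cj_cj q hmul hns y]
    exact moufangA q hmul hns c x y
  have T2 : ∀ x y : C,
      (LinearMap.mulRight R (octConj q c)) (x * y)
        = octConj q ((LinearMap.mulLeft R (octConj q c)) (octConj q x))
          * octConj q (((LinearMap.mulRight R c).comp (LinearMap.mulLeft R c))
              (octConj q y)) := by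
    intro x y
    simp only [LinearMap.coe_comp, Function.comp_apply, LinearMap.mulRight_apply,
      LinearMap.mulLeft_apply]
    rw [cjmul q hmul hns (octConj q c) (octConj q x),
      cjmul q hmul hns (c * octConj q y) c,
      cjmul q hmul hns c (octConj q y),
      cj_cj q hmul hns c, cj_cj q hmul hns x, cj_cj q hmul hns y]
    exact I2 q hmul hns c x y hc
  have T3 : ∀ x y : C,
      (LinearMap.mulLeft R (octConj q c)) (x * y)
        = octConj q (((LinearMap.mulRight R c).comp (LinearMap.mulLeft R c))
              (octConj q x))
          * octConj q ((LinearMap.mulRight R (octConj q c)) (octConj q y)) := by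
    intro x y
    simp only [LinearMap.coe_comp, Function.comp_apply, LinearMap.mulRight_apply,
      LinearMap.mulLeft_apply]
    rw [cjmul q hmul hns (c * octConj q x) c,
      cjmul q hmul hns c (octConj q x),
      cjmul q hmul hns (octConj q y) (octConj q c),
      cj_cj q hmul hns c, cj_cj q hmul hns x, cj_cj q hmul hns y]
    exact I3 q hmul hns c x y hc
  exact ⟨⟨hB, hR, hL, qB, qR, qL, T1⟩, ⟨hR, hL, hB, qR, qL, qB, T2⟩,
    ⟨hL, hB, hR, qL, qB, qR, T3⟩⟩
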